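/- arXiv:2305.00275 — 3 statements merged into one kernel-verified Lean document; each statement's English description precedes it below -/
import Mathlib

section
/- Let $L_k$ denote the $k$-th Legendre polynomial on $[-1,1]$ and for $k \geq 0$ define $\hat h_k = L_k + \alpha_k L_{k+1} + \beta_k L_{k+2} + \gamma_k L_{k+3} + \eta_k L_{k+4}$ with $\alpha_k = 0$, $\beta_k = -\frac{4k+10}{2k+7}$, $\gamma_k = 0$, and $\eta_k = \frac{2k+3}{2k+7}$. Then $\hat h_k(1) = \hat h_k(-1) = 0$ and $\hat h_k'(1) = \hat h_k'(-1) = 0$. -/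
/-!
Even shifts preserve the parity of the Legendre polynomials, so `L_{k+2j}(±1) = (±1)^k` and
`L_{k+2j}'(±1) = (±1)^(k+1) T_{k+2j}` with `T_n = n(n+1)/2`. The four endpoint conditions
therefore reduce to the two coefficient identities `1 + β_k + η_k = 0` and
`T_k + β_k T_{k+2} + η_k T_{k+4} = 0`.
-/

theorem deriv_add_const_mul_add_const_mul {𝕜 : Type*} [NontriviallyNormedField 𝕜]
    {f g h : 𝕜 → 𝕜} {x : 𝕜} (b c : 𝕜) (hf : DifferentiableAt 𝕜 f x)
    (hg : DifferentiableAt 𝕜 g x) (hh : DifferentiableAt 𝕜 h x) :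
    deriv (fun y => f y + b * g y + c * h y) x = deriv f x + b * deriv g x + c * deriv h x :=
  ((hf.hasDerivAt.add (hg.hasDerivAt.const_mul b)).add (hh.hasDerivAt.const_mul c)).deriv

theorem hat_coeff_sum_eq_zero {K : Type*} [Field K] (k : K) (hk : 2 * k + 7 ≠ 0) :
    1 + -((4 * k + 10) / (2 * k + 7)) + (2 * k + 3) / (2 * k + 7) = 0 := by
  linear_combination -(mul_inv_cancel₀ hk)

-- `(2k+3) T_{k+4} - (4k+10) T_{k+2} = -(2k+7) T_k`, where `T_n = n(n+1)/2`.
theorem hat_coeff_triangular_sum_eq_zero {K : Type*} [Field K] (k : K) (hk : 2 * k + 7 ≠ 0) :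
    k * (k + 1) / 2 + -((4 * k + 10) / (2 * k + 7)) * ((k + 2) * (k + 2 + 1) / 2)
      + (2 * k + 3) / (2 * k + 7) * ((k + 4) * (k + 4 + 1) / 2) = 0 := by
  linear_combination -(k * (k + 1) / 2) * mul_inv_cancel₀ hk

/-- the compact combination
`ĥ_k = L_k + α_k L_{k+1} + β_k L_{k+2} + γ_k L_{k+3} + η_k L_{k+4}`
of Legendre polynomials, with `α_k = γ_k = 0`, `β_k = -(4k+10)/(2k+7)`,
`η_k = (2k+3)/(2k+7)`, vanishes together with its derivative at `±1`.
The Legendre polynomials are encoded through their endpoint values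
`L_k(1) = 1`, `L_k(-1) = (-1)^k`, `L_k'(1) = k(k+1)/2`,
`L_k'(-1) = (-1)^{k+1} k(k+1)/2`. -/
theorem stmt_3 (L : ℕ → ℝ → ℝ)
    (hdiff : ∀ k, Differentiable ℝ (L k))
    (hval1 : ∀ k, L k 1 = 1)
    (hvalm1 : ∀ k, L k (-1) = (-1 : ℝ)^k)
    (hder1 : ∀ k, deriv (L k) 1 = (k : ℝ) * (k + 1) / 2)
    (hderm1 : ∀ k, deriv (L k) (-1) = (-1 : ℝ)^(k+1) * ((k : ℝ) * (k + 1) / 2))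
    (k : ℕ)
    (hk : ℝ → ℝ)
    (hhk : ∀ x : ℝ, hk x =
      L k x + (0 : ℝ) * L (k+1) x
        + (-((4 * (k : ℝ) + 10) / (2 * (k : ℝ) + 7))) * L (k+2) x
        + (0 : ℝ) * L (k+3) x
        + ((2 * (k : ℝ) + 3) / (2 * (k : ℝ) + 7)) * L (k+4) x) :
    hk 1 = 0 ∧ hk (-1) = 0 ∧ deriv hk 1 = 0 ∧ deriv hk (-1) = 0 := by
  have hden : 2 * (k : ℝ) + 7 ≠ 0 := by positivity
  set β := -((4 * (k : ℝ) + 10) / (2 * (k : ℝ) + 7))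
  set η := (2 * (k : ℝ) + 3) / (2 * (k : ℝ) + 7)
  have hsum : 1 + β + η = 0 := hat_coeff_sum_eq_zero _ hden
  have htri := hat_coeff_triangular_sum_eq_zero _ hden
  have hk_eq : hk = fun x => L k x + β * L (k + 2) x + η * L (k + 4) x :=
    funext fun x => by rw [hhk]; ring
  have hderiv (x : ℝ) :
      deriv hk x = deriv (L k) x + β * deriv (L (k + 2)) x + η * deriv (L (k + 4)) x := by
    rw [hk_eq]
    exact deriv_add_const_mul_add_const_mul β η (hdiff k x) (hdiff _ x) (hdiff _ x)
  refine ⟨?_, ?_, ?_, ?_⟩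
  · rw [hhk, hval1, hval1, hval1, hval1, hval1]
    linear_combination hsum
  · rw [hhk, hvalm1, hvalm1, hvalm1, hvalm1, hvalm1]
    linear_combination (-1 : ℝ) ^ k * hsum
  · rw [hderiv, hder1, hder1, hder1]
    push_cast
    linear_combination htri
  · rw [hderiv, hderm1, hderm1, hderm1]
    push_cast
    linear_combination (-1 : ℝ) ^ (k + 1) * htri
end

section
/- For $k \geq 0$, the choice $\alpha_k = 0$, $\beta_k = -\frac{4k+10}{2k+7}$, $\gamma_k = 0$, $\eta_k = \frac{2k+3}{2k+7}$ is the unique choice of real coefficients $(\alpha_k, \beta_k, \gamma_k, \eta_k)$ such that $\hat h_k = L_k + \alpha_k L_{k+1} + \beta_k L_{k+2} + \gamma_k L_{k+3} + \eta_k L_{k+4}$ satisfies $\hat h_k(\pm 1) = 0$ and $\hat h_k'(\pm 1) = 0$. -/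
/-- the coefficients `α_k = 0`, `β_k = -(4k+10)/(2k+7)`,
`γ_k = 0`, `η_k = (2k+3)/(2k+7)` are the unique real coefficients for which
`ĥ_k = L_k + α_k L_{k+1} + β_k L_{k+2} + γ_k L_{k+3} + η_k L_{k+4}` and its
derivative vanish at `±1`, where the Legendre polynomials `L_k` satisfy
`L_k(1) = 1`, `L_k(-1) = (-1)^k`, `L_k'(1) = k(k+1)/2`,
`L_k'(-1) = (-1)^{k+1} k(k+1)/2`. -/
theorem stmt_4 (L : ℕ → ℝ → ℝ)
    (hdiff : ∀ k, Differentiable ℝ (L k))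
    (hval1 : ∀ k, L k 1 = 1)
    (hvalm1 : ∀ k, L k (-1) = (-1 : ℝ)^k)
    (hder1 : ∀ k, deriv (L k) 1 = (k : ℝ) * (k + 1) / 2)
    (hderm1 : ∀ k, deriv (L k) (-1) = (-1 : ℝ)^(k+1) * ((k : ℝ) * (k + 1) / 2))
    (k : ℕ)
    (P : ℝ × ℝ × ℝ × ℝ → Prop)
    (hP : ∀ c : ℝ × ℝ × ℝ × ℝ, P c ↔
      ((fun x => L k x + c.1 * L (k+1) x + c.2.1 * L (k+2) x
          + c.2.2.1 * L (k+3) x + c.2.2.2 * L (k+4) x) 1 = 0 ∧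
       (fun x => L k x + c.1 * L (k+1) x + c.2.1 * L (k+2) x
          + c.2.2.1 * L (k+3) x + c.2.2.2 * L (k+4) x) (-1) = 0 ∧
       deriv (fun x => L k x + c.1 * L (k+1) x + c.2.1 * L (k+2) x
          + c.2.2.1 * L (k+3) x + c.2.2.2 * L (k+4) x) 1 = 0 ∧
       deriv (fun x => L k x + c.1 * L (k+1) x + c.2.1 * L (k+2) x
          + c.2.2.1 * L (k+3) x + c.2.2.2 * L (k+4) x) (-1) = 0)) :
    P (0, -((4 * (k : ℝ) + 10) / (2 * (k : ℝ) + 7)), 0,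
        (2 * (k : ℝ) + 3) / (2 * (k : ℝ) + 7)) ∧
    ∀ c : ℝ × ℝ × ℝ × ℝ, P c →
      c = (0, -((4 * (k : ℝ) + 10) / (2 * (k : ℝ) + 7)), 0,
        (2 * (k : ℝ) + 3) / (2 * (k : ℝ) + 7)) := by
  set r : ℝ := (k : ℝ) with hr
  have hr0 : (0:ℝ) ≤ r := Nat.cast_nonneg k
  have h7 : (2*r+7) ≠ 0 := by positivity
  have hs : ((-1:ℝ)^k) ≠ 0 := by positivity
  have hd : ∀ (a b g e : ℝ) (x : ℝ),
      deriv (fun x => L k x + a * L (k+1) x + b * L (k+2) x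
          + g * L (k+3) x + e * L (k+4) x) x
      = deriv (L k) x + a * deriv (L (k+1)) x + b * deriv (L (k+2)) x
          + g * deriv (L (k+3)) x + e * deriv (L (k+4)) x := by
    intro a b g e x
    exact ((((((hdiff k x).hasDerivAt).add
      (((hdiff (k+1) x).hasDerivAt).const_mul a)).add
      (((hdiff (k+2) x).hasDerivAt).const_mul b)).add
      (((hdiff (k+3) x).hasDerivAt).const_mul g)).add
      (((hdiff (k+4) x).hasDerivAt).const_mul e)).deriv
  constructor
  · rw [hP]
    refine ⟨?_, ?_, ?_, ?_⟩ <;>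
      simp only [hd, hval1, hvalm1, hder1, hderm1, pow_succ] <;>
      push_cast <;> field_simp <;> ring
  · rintro ⟨a, b, g, e⟩ hc
    rw [hP] at hc
    obtain ⟨h1, h2, h3, h4⟩ := hc
    simp only [hd, hval1, hvalm1, hder1, hderm1, pow_succ] at h1 h2 h3 h4
    push_cast at h1 h2 h3 h4
    have e2 : 1 - a + b - g + e = 0 := by
      apply mul_left_cancel₀ hs
      linear_combination h2
    have e4 : r*(r+1)/2 - a*((r+1)*(r+2)/2) + b*((r+2)*(r+3)/2)
        - g*((r+3)*(r+4)/2) + e*((r+4)*(r+5)/2) = 0 := by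
      apply mul_left_cancel₀ hs
      linear_combination -h4
    have ha : a * (4*r+10) = 0 := by
      linear_combination ((r+3)*(r+4)/2)*(h1 - e2) - (h3 - e4)
    have ha0 : a = 0 := by
      rcases mul_eq_zero.mp ha with h | h
      · exact h
      · nlinarith
    have hg0 : g = 0 := by linarith [h1, e2]
    have he : e * (2*r+7) = 2*r+3 := by
      linear_combination (1/2)*h3 + (1/2)*e4 - ((r+2)*(r+3)/4)*h1 - ((r+2)*(r+3)/4)*e2
    have he0 : e = (2*r+3)/(2*r+7) := by
      field_simp
      linarith [he]
    have hb0 : b = -((4*r+10)/(2*r+7)) := by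
      have hb : b = -1 - e := by linarith [h1, e2]
      rw [hb, he0]
      field_simp
      ring
    simp [ha0, hg0, he0, hb0]
end

section
/- Fix $a > 0$, $V_R < V_F$, and a firing rate $N^\infty > 0$, and define $p^\infty(v) = \frac{N^\infty}{a} e^{-v^2/(2a)} \int_{\max\{v, V_R\}}^{V_F} e^{w^2/(2a)}\, dw$ for $v \leq V_F$ (taking $h(v) = -v$, i.e., $b = 0$). Then $p^\infty$ satisfies the stationary equation $\partial_v(-v\,p^\infty) - a\,\partial_{vv} p^\infty = 0$ on $(-\infty, V_R) \cup (V_R, V_F)$, with $p^\infty(V_F) = 0$ and $-a\,\partial_v p^\infty(V_F) = N^\infty$. -/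
private lemma aux_deriv (p q d e : ℝ → ℝ) (s : Set ℝ) (hs : IsOpen s)
    (heq : ∀ x ∈ s, p x = q x)
    (hq : ∀ x, HasDerivAt q (d x) x)
    (hd : ∀ x, HasDerivAt d (e x) x)
    (v : ℝ) (hv : v ∈ s) :
    deriv (fun w => -w * p w) v = -q v + -v * d v ∧ deriv (deriv p) v = e v := by
  have hmem : s ∈ nhds v := hs.mem_nhds hv
  have hpq : p =ᶠ[nhds v] q := Filter.eventuallyEq_of_mem hmem heq
  refine ⟨?_, ?_⟩
  · have h1 : (fun w => -w * p w) =ᶠ[nhds v] fun w => -w * q w :=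
      hpq.mono fun x hx => by simp [hx]
    rw [h1.deriv_eq]
    have h2 : HasDerivAt (fun w => -w * q w) (-1 * q v + -v * d v) v :=
      ((hasDerivAt_id v).neg).mul (hq v)
    rw [h2.deriv]; ring
  · have h2 : deriv p =ᶠ[nhds v] d :=
      Filter.eventuallyEq_of_mem hmem fun x hx =>
        ((Filter.eventuallyEq_of_mem (hs.mem_nhds hx) heq).deriv_eq).trans (hq x).deriv
    rw [h2.deriv_eq, (hd v).deriv]

/-- the stationary profile
`p∞(v) = (N∞/a) e^{-v²/(2a)} ∫_{max(v,V_R)}^{V_F} e^{w²/(2a)} dw`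
of the linear NNLIF equation (drift `-v`, diffusion `a`) satisfies the
stationary equation `∂_v(-v p∞) - a ∂_{vv} p∞ = 0` away from `V_R`, vanishes
at `V_F`, and has firing rate `-a ∂_v p∞(V_F⁻) = N∞` (left derivative). -/
theorem stmt_13 (a VR VF Ninf : ℝ) (ha : 0 < a) (hVR : VR < VF)
    (hN : 0 < Ninf)
    (pinf : ℝ → ℝ)
    (hp : ∀ v : ℝ, pinf v = Ninf / a * Real.exp (-v^2 / (2*a)) *
      ∫ w in (max v VR)..VF, Real.exp (w^2 / (2*a))) :
    (∀ v ∈ Set.Iio VR,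
      deriv (fun w => -w * pinf w) v - a * deriv (deriv pinf) v = 0) ∧
    (∀ v ∈ Set.Ioo VR VF,
      deriv (fun w => -w * pinf w) v - a * deriv (deriv pinf) v = 0) ∧
    pinf VF = 0 ∧
    -a * derivWithin pinf (Set.Iic VF) VF = Ninf := by
  have ha' : a ≠ 0 := ne_of_gt ha
  set E : ℝ → ℝ := fun w => Real.exp (w ^ 2 / (2 * a)) with hEdef
  have hEc : Continuous E := by fun_prop
  set F : ℝ → ℝ := fun v => ∫ w in v..VF, E w with hFdef
  have hF : ∀ v : ℝ, HasDerivAt F (-E v) v := fun v =>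
    intervalIntegral.integral_hasDerivAt_left (hEc.intervalIntegrable v VF)
      (hEc.stronglyMeasurableAtFilter _ _) hEc.continuousAt
  have hg : ∀ v : ℝ, HasDerivAt (fun v : ℝ => Real.exp (-v ^ 2 / (2 * a)))
      (Real.exp (-v ^ 2 / (2 * a)) * (-v / a)) v := by
    intro v
    have h1 : HasDerivAt (fun v : ℝ => -v ^ 2 / (2 * a)) (-(2 * v) / (2 * a)) v := by
      simpa using ((hasDerivAt_pow 2 v).neg.div_const (2 * a))
    have h2 := h1.exp
    convert h2 using 1
    field_simp
  have hlin : ∀ v : ℝ, HasDerivAt (fun x : ℝ => -(x / a)) (-(1 / a)) v := fun v =>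
    ((hasDerivAt_id v).div_const a).neg
  -- the branch functions
  set q1 : ℝ → ℝ := fun x => Ninf / a * Real.exp (-x ^ 2 / (2 * a)) * F VR with hq1def
  set d1 : ℝ → ℝ := fun x => -(x / a) * q1 x with hd1def
  set e1 : ℝ → ℝ := fun x => -(1 / a) * q1 x + -(x / a) * d1 x with he1def
  set q2 : ℝ → ℝ := fun x => Ninf / a * Real.exp (-x ^ 2 / (2 * a)) * F x with hq2def
  set d2 : ℝ → ℝ := fun x => -(x / a) * q2 x - Ninf / a with hd2def
  set e2 : ℝ → ℝ := fun x => -(1 / a) * q2 x + -(x / a) * d2 x with he2def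
  have hq1 : ∀ v : ℝ, HasDerivAt q1 (d1 v) v := by
    intro v
    have h := ((hg v).const_mul (Ninf / a)).mul_const (F VR)
    have heq : Ninf / a * (Real.exp (-v ^ 2 / (2 * a)) * (-v / a)) * F VR = d1 v := by
      simp only [hd1def, hq1def]; ring
    exact heq ▸ h
  have hq2 : ∀ v : ℝ, HasDerivAt q2 (d2 v) v := by
    intro v
    have h := ((hg v).const_mul (Ninf / a)).mul (hF v)
    have key : Real.exp (-v ^ 2 / (2 * a)) * E v = 1 := by
      rw [hEdef]
      rw [← Real.exp_add, show -v ^ 2 / (2 * a) + v ^ 2 / (2 * a) = 0 by ring, Real.exp_zero]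
    have heq : Ninf / a * (Real.exp (-v ^ 2 / (2 * a)) * (-v / a)) * F v +
        Ninf / a * Real.exp (-v ^ 2 / (2 * a)) * -E v = d2 v := by
      simp only [hd2def, hq2def]
      linear_combination (-(Ninf / a)) * key
    exact heq ▸ h
  have hd1 : ∀ v : ℝ, HasDerivAt d1 (e1 v) v := fun v => (hlin v).mul (hq1 v)
  have hd2 : ∀ v : ℝ, HasDerivAt d2 (e2 v) v := fun v => ((hlin v).mul (hq2 v)).sub_const _
  have heq1 : ∀ x ∈ Set.Iio VR, pinf x = q1 x := by
    intro x hx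
    simp only [hq1def, hFdef, hEdef]
    rw [hp x, max_eq_right (le_of_lt hx)]
  have heq2 : ∀ x ∈ Set.Ioi VR, pinf x = q2 x := by
    intro x hx
    simp only [hq2def, hFdef, hEdef]
    rw [hp x, max_eq_left (le_of_lt hx)]
  refine ⟨?_, ?_, ?_, ?_⟩
  · intro v hv
    obtain ⟨h1, h2⟩ := aux_deriv pinf q1 d1 e1 (Set.Iio VR) isOpen_Iio heq1 hq1 hd1 v hv
    rw [h1, h2]
    simp only [he1def, hd1def]
    field_simp
    ring
  · intro v hv
    obtain ⟨h1, h2⟩ := aux_deriv pinf q2 d2 e2 (Set.Ioi VR) isOpen_Ioi heq2 hq2 hd2 v hv.1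
    rw [h1, h2]
    simp only [he2def, hd2def]
    field_simp
    ring
  · rw [hp VF, max_eq_left (le_of_lt hVR)]
    simp
  · have hpq : pinf =ᶠ[nhds VF] q2 :=
      Filter.eventuallyEq_of_mem (isOpen_Ioi.mem_nhds hVR) heq2
    have hP : HasDerivAt pinf (d2 VF) VF := (hq2 VF).congr_of_eventuallyEq hpq
    have hdw : derivWithin pinf (Set.Iic VF) VF = d2 VF :=
      hP.hasDerivWithinAt.derivWithin (uniqueDiffOn_Iic VF VF Set.self_mem_Iic)
    have hF0 : F VF = 0 := intervalIntegral.integral_same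
    rw [hdw]
    simp only [hd2def, hq2def, hF0, mul_zero, mul_zero, zero_sub]
    field_simp
end
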